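/- On a rooted tree, the partial firing number c↓(u) equals the smallest non-negative integer k such that ψ_u(k) < degree(u), where ψ_u(k) = σ(u) − k·degree(u) + Σ_{v ∈ children(u)} δ(v,k). -/

import Mathlib

set_option linter.unusedSectionVars false


open scoped Classical

/-- A finite tree rooted at `root`, with an explicit parent function. -/
structure SandpileTree (V : Type) [Fintype V] [DecidableEq V] where
  G : SimpleGraph V
  isTree : G.IsTree
  root : V
  parent : V → V
  parent_root : parent root = root
  parent_adj : ∀ v, v ≠ root → G.Adj v (parent v)
  parent_reaches_root : ∀ v, ∃ n, parent^[n] v = root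

variable {V : Type} [Fintype V] [DecidableEq V]

namespace SandpileTree

noncomputable def deg (T : SandpileTree V) (v : V) : ℕ := T.G.degree v

/-- The subtree of `u`: all vertices having `u` as an (iterated-parent) ancestor. -/
def subtree (T : SandpileTree V) (u : V) : Set V := {v | ∃ n, T.parent^[n] v = u}

noncomputable def children (T : SandpileTree V) (u : V) : Finset V :=
  Finset.univ.filter fun v => T.parent v = u ∧ v ≠ u

noncomputable def fire (T : SandpileTree V) (σ : V → ℕ) (u : V) : V → ℕ :=
  fun w => if w = u then σ u - T.deg u else if T.G.Adj u w then σ w + 1 else σ w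

noncomputable def fireList (T : SandpileTree V) : (V → ℕ) → List V → (V → ℕ)
  | σ, [] => σ
  | σ, v :: l => fireList T (fire T σ v) l

def ValidSeq (T : SandpileTree V) : (V → ℕ) → List V → Prop
  | _, [] => True
  | σ, v :: l => T.deg v ≤ σ v ∧ ValidSeq T (fire T σ v) l

/-- No vertex of `S` is full. -/
def LocalTerminal (T : SandpileTree V) (σ : V → ℕ) (S : Set V) : Prop :=
  ∀ v ∈ S, σ v < T.deg v

/-- The (unique, order-independent) configuration obtained from `σ` by firing full
vertices of `subtree u` until none is full. -/
noncomputable def final (T : SandpileTree V) (σ : V → ℕ) (u : V) : V → ℕ :=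
  if h : ∃ l : List V, (∀ v ∈ l, v ∈ T.subtree u) ∧ T.ValidSeq σ l ∧
      T.LocalTerminal (T.fireList σ l) (T.subtree u)
  then T.fireList σ h.choose else σ

/-- Local upward contribution: the number of extra chips received by `parent u`
after adding `x` chips at `u` and firing `subtree u` back to local terminality. -/
noncomputable def delta (T : SandpileTree V) (σ : V → ℕ) (u : V) (x : ℕ) : ℕ :=
  T.final (fun w => σ w + if w = u then x else 0) u (T.parent u) -
    T.final σ u (T.parent u)

/-- `ψ_u(k) = σ(u) − k·deg(u) + Σ_{v ∈ children u} δ(v,k)`. -/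
noncomputable def psi (T : SandpileTree V) (σ : V → ℕ) (u : V) (k : ℕ) : ℤ :=
  (σ u : ℤ) - (k : ℤ) * T.deg u + ∑ v ∈ T.children u, (T.delta σ v k : ℤ)

variable (T : SandpileTree V)

/-! ### basic fire lemmas -/

lemma le_fire (σ : V → ℕ) {v w : V} (h : w ≠ v) : σ w ≤ T.fire σ v w := by
  unfold fire; simp only [if_neg h]; split <;> omega

lemma fire_int (σ : V → ℕ) {v : V} (hv : T.deg v ≤ σ v) (w : V) :
    (T.fire σ v w : ℤ) = (σ w : ℤ) - (if w = v then (T.deg v : ℤ) else 0)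
      + (if T.G.Adj v w then 1 else 0) := by
  unfold fire
  by_cases h : w = v
  · subst h; simp [T.G.irrefl]; omega
  · simp only [if_neg h]; split <;> simp

lemma fire_mono {σ τ : V → ℕ} (h : ∀ x, σ x ≤ τ x) (v : V) :
    ∀ w, T.fire σ v w ≤ T.fire τ v w := by
  intro w; unfold fire
  by_cases hw : w = v
  · simp only [if_pos hw]; have := h v; omega
  · simp only [if_neg hw]; split <;> [skip; skip] <;> have := h w <;> omega

lemma fireList_append (σ : V → ℕ) (a b : List V) :
    T.fireList σ (a ++ b) = T.fireList (T.fireList σ a) b := by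
  induction a generalizing σ with
  | nil => rfl
  | cons x t ih => simp [fireList, ih]

lemma validSeq_append {σ : V → ℕ} {a b : List V} :
    T.ValidSeq σ (a ++ b) ↔ T.ValidSeq σ a ∧ T.ValidSeq (T.fireList σ a) b := by
  induction a generalizing σ with
  | nil => simp [ValidSeq, fireList]
  | cons x t ih => simp [ValidSeq, fireList, ih, and_assoc]

lemma valid_mono {σ τ : V → ℕ} (h : ∀ x, σ x ≤ τ x) {l : List V} (hv : T.ValidSeq σ l) :
    T.ValidSeq τ l ∧ ∀ w, T.fireList σ l w ≤ T.fireList τ l w := by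
  induction l generalizing σ τ with
  | nil => exact ⟨trivial, h⟩
  | cons x t ih =>
    obtain ⟨h1, h2⟩ := hv
    obtain ⟨ih1, ih2⟩ := ih (T.fire_mono h x) h2
    exact ⟨⟨le_trans h1 (h x), ih1⟩, ih2⟩

lemma le_fireList_of_not_mem (σ : V → ℕ) {v : V} {l : List V} (h : v ∉ l) :
    σ v ≤ T.fireList σ l v := by
  induction l generalizing σ with
  | nil => exact le_refl _
  | cons x t ih =>
    simp only [List.mem_cons, not_or] at h
    exact le_trans (T.le_fire σ h.1) (ih _ h.2)

/-- Chip conservation. -/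
lemma conservation {σ : V → ℕ} {l : List V} (hv : T.ValidSeq σ l) (w : V) :
    (T.fireList σ l w : ℤ) = (σ w : ℤ) - l.count w * T.deg w
      + (l.map fun x => if T.G.Adj x w then (1:ℤ) else 0).sum := by
  induction l generalizing σ with
  | nil => simp [fireList]
  | cons x t ih =>
    obtain ⟨h1, h2⟩ := hv
    rw [fireList, ih h2, T.fire_int σ h1 w, List.count_cons, List.map_cons, List.sum_cons]
    by_cases hwx : w = x
    · subst hwx; simp; ring
    · simp [hwx, Ne.symm hwx]; ring

lemma fire_comm {σ : V → ℕ} {x y : V} (hxy : x ≠ y)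
    (hx : T.deg x ≤ σ x) (hy : T.deg y ≤ σ y) :
    T.fire (T.fire σ x) y = T.fire (T.fire σ y) x := by
  funext w
  by_cases hwx : w = x <;> by_cases hwy : w = y
  · exact absurd (hwx.symm.trans hwy) hxy
  · subst hwx
    show (if w = y then _ else if T.G.Adj y w then T.fire σ w w + 1 else T.fire σ w w)
      = (if w = w then T.fire σ y w - T.deg w else _)
    rw [if_neg hwy, if_pos rfl]
    have e1 : T.fire σ w w = σ w - T.deg w := by simp [fire]
    have e2 : T.fire σ y w = if T.G.Adj y w then σ w + 1 else σ w := by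
      simp [fire, hwy]
    rw [e1, e2]; split <;> omega
  · subst hwy
    show (if w = w then T.fire σ x w - T.deg w else _)
      = (if w = x then _ else if T.G.Adj x w then T.fire σ w w + 1 else T.fire σ w w)
    rw [if_pos rfl, if_neg hwx]
    have e1 : T.fire σ w w = σ w - T.deg w := by simp [fire]
    have e2 : T.fire σ x w = if T.G.Adj x w then σ w + 1 else σ w := by
      simp [fire, hwx]
    rw [e1, e2]; split <;> omega
  · show (if w = y then _ else if T.G.Adj y w then T.fire σ x w + 1 else T.fire σ x w)
      = (if w = x then _ else if T.G.Adj x w then T.fire σ y w + 1 else T.fire σ y w)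
    rw [if_neg hwy, if_neg hwx]
    have e1 : T.fire σ x w = if T.G.Adj x w then σ w + 1 else σ w := by simp [fire, hwx]
    have e2 : T.fire σ y w = if T.G.Adj y w then σ w + 1 else σ w := by simp [fire, hwy]
    rw [e1, e2]; split <;> split <;> omega

lemma extract_comm {h : V} : ∀ (a : List V) (σ : V → ℕ) (b : List V),
    T.deg h ≤ σ h → h ∉ a → T.ValidSeq σ (a ++ h :: b) →
    T.ValidSeq (T.fire σ h) (a ++ b) ∧
      T.fireList (T.fire σ h) (a ++ b) = T.fireList σ (a ++ h :: b) := by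
  intro a
  induction a with
  | nil => intro σ b hh _ hv; exact ⟨hv.2, rfl⟩
  | cons x t ih =>
    intro σ b hh hmem hv
    simp only [List.mem_cons, not_or] at hmem
    obtain ⟨h1, h2⟩ := hv
    have hxh : x ≠ h := fun e => hmem.1 e.symm
    have hh' : T.deg h ≤ T.fire σ x h := le_trans hh (T.le_fire σ (Ne.symm hxh))
    obtain ⟨ihv, ihe⟩ := ih (T.fire σ x) b hh' hmem.2 h2
    have hcomm := T.fire_comm hxh h1 hh
    constructor
    · refine ⟨le_trans h1 (T.le_fire σ hxh), ?_⟩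
      rw [show T.fire (T.fire σ h) x = T.fire (T.fire σ x) h from (T.fire_comm (Ne.symm hxh) hh h1)]
      exact ihv
    · show T.fireList (T.fire (T.fire σ h) x) (t ++ b) = _
      rw [show T.fire (T.fire σ h) x = T.fire (T.fire σ x) h from (T.fire_comm (Ne.symm hxh) hh h1)]
      exact ihe

lemma mem_split_first {h : V} {l : List V} (hm : h ∈ l) :
    ∃ a b, l = a ++ h :: b ∧ h ∉ a := by
  induction l with
  | nil => simp at hm
  | cons x t ih =>
    by_cases hx : h = x
    · exact ⟨[], t, by simp [hx], by simp⟩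
    · obtain ⟨a, b, e, hna⟩ := ih (by simpa [hx] using hm)
      exact ⟨x :: a, b, by simp [e], by simp [hna, Ne.symm, hx]⟩

/-- Least action principle. -/
lemma least_action {S : Set V} : ∀ (l₁ : List V) (σ : V → ℕ) (l₂ : List V),
    T.ValidSeq σ l₁ → (∀ x ∈ l₁, x ∈ S) → T.ValidSeq σ l₂ →
    T.LocalTerminal (T.fireList σ l₂) S → ∀ x, l₁.count x ≤ l₂.count x := by
  intro l₁
  induction l₁ with
  | nil => intro _ _ _ _ _ _ x; simp
  | cons h t ih =>
    intro σ l₂ hv1 hm1 hv2 ht2 x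
    obtain ⟨hfull, hvt⟩ := hv1
    have hhS : h ∈ S := hm1 h (by simp)
    have hmem2 : h ∈ l₂ := by
      by_contra hns
      have := T.le_fireList_of_not_mem σ hns
      exact absurd (ht2 h hhS) (by omega)
    obtain ⟨a, b, rfl, hna⟩ := mem_split_first hmem2
    obtain ⟨hv2', he2⟩ := T.extract_comm a σ b hfull hna hv2
    have ht2' : T.LocalTerminal (T.fireList (T.fire σ h) (a ++ b)) S := he2 ▸ ht2
    have := ih (T.fire σ h) (a ++ b) hvt (fun y hy => hm1 y (by simp [hy])) hv2' ht2' x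
    simp only [List.count_append, List.count_cons] at *
    omega

lemma counts_eq {S : Set V} {σ : V → ℕ} {l₁ l₂ : List V}
    (hv1 : T.ValidSeq σ l₁) (hm1 : ∀ x ∈ l₁, x ∈ S)
    (ht1 : T.LocalTerminal (T.fireList σ l₁) S)
    (hv2 : T.ValidSeq σ l₂) (hm2 : ∀ x ∈ l₂, x ∈ S)
    (ht2 : T.LocalTerminal (T.fireList σ l₂) S) (x : V) :
    l₁.count x = l₂.count x :=
  le_antisymm (T.least_action l₁ σ l₂ hv1 hm1 hv2 ht2 x)
    (T.least_action l₂ σ l₁ hv2 hm2 hv1 ht1 x)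

lemma length_eq_sum_count (l : List V) :
    l.length = ∑ x : V, l.count x := by
  induction l with
  | nil => simp
  | cons h t ih =>
    simp only [List.length_cons, List.count_cons, ih]
    rw [Finset.sum_add_distrib]
    simp

/-- Existence of a terminal sequence given a length bound on valid sequences. -/
lemma exists_terminal {S : Set V} {σ : V → ℕ} {N : ℕ}
    (hb : ∀ l : List V, T.ValidSeq σ l → (∀ x ∈ l, x ∈ S) → l.length ≤ N) :
    ∃ L, T.ValidSeq σ L ∧ (∀ x ∈ L, x ∈ S) ∧ T.LocalTerminal (T.fireList σ L) S := by
  suffices h : ∀ (m : ℕ) (l : List V), T.ValidSeq σ l → (∀ x ∈ l, x ∈ S) →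
      N ≤ l.length + m →
      ∃ L, T.ValidSeq σ L ∧ (∀ x ∈ L, x ∈ S) ∧ T.LocalTerminal (T.fireList σ L) S by
    exact h (N + 1) [] trivial (by simp) (by simp)
  intro m
  induction m with
  | zero =>
    intro l hv hm hlen
    by_cases ht : T.LocalTerminal (T.fireList σ l) S
    · exact ⟨l, hv, hm, ht⟩
    · obtain ⟨w, hwS, hwfull⟩ := by
        unfold LocalTerminal at ht; push_neg at ht; exact ht
      have hv' : T.ValidSeq σ (l ++ [w]) := by
        rw [T.validSeq_append]; exact ⟨hv, hwfull, trivial⟩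
      have := hb (l ++ [w]) hv' (by
        intro x hx; rcases List.mem_append.mp hx with h | h
        · exact hm x h
        · simp at h; exact h ▸ hwS)
      simp at this; omega
  | succ m ihm =>
    intro l hv hm hlen
    by_cases ht : T.LocalTerminal (T.fireList σ l) S
    · exact ⟨l, hv, hm, ht⟩
    · obtain ⟨w, hwS, hwfull⟩ := by
        unfold LocalTerminal at ht; push_neg at ht; exact ht
      have hv' : T.ValidSeq σ (l ++ [w]) := by
        rw [T.validSeq_append]; exact ⟨hv, hwfull, trivial⟩
      refine ihm (l ++ [w]) hv' ?_ (by simp; omega)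
      intro x hx; rcases List.mem_append.mp hx with h | h
      · exact hm x h
      · simp at h; exact h ▸ hwS

lemma count_split {u : V} : ∀ (l : List V) (j : ℕ), j < l.count u →
    ∃ p s, l = p ++ u :: s ∧ p.count u = j := by
  intro l
  induction l with
  | nil => simp
  | cons h t ih =>
    intro j hj
    by_cases hh : h = u
    · subst hh
      rcases j with _ | j'
      · exact ⟨[], t, rfl, rfl⟩
      · rw [List.count_cons_self] at hj
        obtain ⟨p, s, e, hc⟩ := ih j' (by omega)
        exact ⟨h :: p, s, by simp [e], by simp [hc]⟩
    · have hne : u ≠ h := fun e => hh e.symm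
      rw [List.count_cons_of_ne hh] at hj
      obtain ⟨p, s, e, hc⟩ := ih j hj
      exact ⟨h :: p, s, by simp [e], by rw [List.count_cons_of_ne hh]; exact hc⟩

/-! ### tree structure -/

lemma iterate_parent_root (n : ℕ) : T.parent^[n] T.root = T.root :=
  Function.iterate_fixed T.parent_root n

lemma eq_root_of_periodic {x : V} {m : ℕ} (hm : m ≠ 0) (h : T.parent^[m] x = x) :
    x = T.root := by
  obtain ⟨n, hn⟩ := T.parent_reaches_root x
  have hq : ∀ q, T.parent^[q * m] x = x := by
    intro q
    induction q with
    | zero => simp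
    | succ q ih =>
      rw [Nat.succ_mul, Nat.add_comm, Function.iterate_add_apply, ih, h]
  calc x = T.parent^[n * m] x := (hq n).symm
    _ = T.parent^[(n * m - n) + n] x := by congr 1; have : n ≤ n * m := Nat.le_mul_of_pos_right n (Nat.pos_of_ne_zero hm); omega
    _ = T.parent^[n * m - n] (T.parent^[n] x) := Function.iterate_add_apply _ _ _ _
    _ = T.root := by rw [hn]; exact T.iterate_parent_root _

lemma mem_subtree_self (u : V) : u ∈ T.subtree u := ⟨0, rfl⟩

lemma mem_subtree_of_parent_mem {x v : V} (h : T.parent x ∈ T.subtree v) :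
    x ∈ T.subtree v := by
  obtain ⟨n, hn⟩ := h
  exact ⟨n + 1, by rw [Function.iterate_succ_apply]; exact hn⟩

lemma parent_mem_subtree {x v : V} (h : x ∈ T.subtree v) (hx : x ≠ v) :
    T.parent x ∈ T.subtree v := by
  obtain ⟨n, hn⟩ := h
  rcases n with _ | n
  · exact absurd hn hx
  · exact ⟨n, by rw [← Function.iterate_succ_apply]; exact hn⟩

lemma child_parent {v u : V} (h : v ∈ T.children u) : T.parent v = u := by
  simpa [children] using (Finset.mem_filter.mp h).2.1

lemma child_ne {v u : V} (h : v ∈ T.children u) : v ≠ u :=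
  (Finset.mem_filter.mp h).2.2

lemma child_ne_root {v u : V} (h : v ∈ T.children u) : v ≠ T.root := by
  intro e
  have hp := child_parent T h
  rw [e, T.parent_root] at hp
  exact child_ne T h (e.trans hp)

lemma child_mem_subtree {v u : V} (h : v ∈ T.children u) : v ∈ T.subtree u :=
  ⟨1, by simpa using child_parent T h⟩

lemma child_subtree_subset {v u : V} (h : v ∈ T.children u) :
    T.subtree v ⊆ T.subtree u := by
  intro x ⟨n, hn⟩
  exact ⟨n + 1, by rw [Function.iterate_succ_apply', hn, child_parent T h]⟩

lemma not_mem_subtree_child {v u : V} (h : v ∈ T.children u) : u ∉ T.subtree v := by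
  rintro ⟨n, hn⟩
  have hcyc : T.parent^[n + 1] u = u := by
    rw [Function.iterate_succ_apply', hn, child_parent T h]
  have hu : u = T.root := T.eq_root_of_periodic (Nat.succ_ne_zero n) hcyc
  have : v = T.root := by
    rw [← hn, hu]; exact T.iterate_parent_root n
  exact child_ne_root T h this

lemma parent_not_mem_subtree {u : V} (hu : u ≠ T.root) : T.parent u ∉ T.subtree u := by
  rintro ⟨n, hn⟩
  have hcyc : T.parent^[n + 1] u = u := by
    rw [Function.iterate_succ_apply]; exact hn
  exact hu (T.eq_root_of_periodic (Nat.succ_ne_zero n) hcyc)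

/-- In a tree with a consistent parent function, every edge is a parent edge. -/
lemma adj_parent {x y : V} (h : T.G.Adj x y) : T.parent x = y ∨ T.parent y = x := by
  haveI : DecidableRel T.G.Adj := Classical.decRel _
  set s : Finset V := Finset.univ.erase T.root with hs
  set f : V → Sym2 V := fun v => s(v, T.parent v) with hf
  have hinj : Set.InjOn f ↑s := by
    intro a ha b hb hab
    simp only [hf, Sym2.eq_iff] at hab
    rcases hab with ⟨h1, _⟩ | ⟨h1, h2⟩
    · exact h1
    · exfalso
      have hcyc : T.parent^[2] a = a := by
        show T.parent (T.parent a) = a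
        rw [h2, h1]
      have := T.eq_root_of_periodic (by norm_num) hcyc
      exact (Finset.mem_erase.mp (by exact_mod_cast ha)).1 this
  have himg : s.image f ⊆ T.G.edgeFinset := by
    intro e he
    obtain ⟨v, hv, rfl⟩ := Finset.mem_image.mp he
    rw [SimpleGraph.mem_edgeFinset]
    exact T.parent_adj v (Finset.mem_erase.mp hv).1
  have hcard : (s.image f).card = Fintype.card V - 1 := by
    rw [Finset.card_image_of_injOn hinj, Finset.card_erase_of_mem (Finset.mem_univ _),
      Finset.card_univ]
  have heq : s.image f = T.G.edgeFinset :=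
    Finset.eq_of_subset_of_card_le himg (by
      have h1 := T.isTree.card_edgeFinset
      omega)
  have hmem : s(x, y) ∈ s.image f := by
    rw [heq, SimpleGraph.mem_edgeFinset]; exact h
  obtain ⟨v, _, hfv⟩ := Finset.mem_image.mp hmem
  rw [hf, Sym2.eq_iff] at hfv
  rcases hfv with ⟨rfl, h2⟩ | ⟨rfl, h2⟩
  · exact Or.inl h2
  · exact Or.inr h2

lemma child_adj {v u : V} (h : v ∈ T.children u) : T.G.Adj v u := by
  have := T.parent_adj v (child_ne_root T h)
  rwa [child_parent T h] at this

/-- Inside `subtree u`, the only vertices adjacent to `u` are the children of `u`. -/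
lemma adj_iff_child {h u : V} (hm : h ∈ T.subtree u) :
    T.G.Adj h u ↔ h ∈ T.children u := by
  constructor
  · intro hadj
    have hne : h ≠ u := T.G.ne_of_adj hadj
    rcases T.adj_parent hadj with h1 | h1
    · exact Finset.mem_filter.mpr ⟨Finset.mem_univ _, h1, hne⟩
    · exfalso
      by_cases hroot : u = T.root
      · have : T.parent u = u := by rw [hroot]; exact T.parent_root
        exact hne (by rw [← h1, this])
      · exact T.parent_not_mem_subtree hroot (h1 ▸ hm)
  · exact fun hc => T.child_adj hc

/-- Inside `subtree v` for a child `v` of `u`, only `v` itself is adjacent to `u`. -/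
lemma adj_iff_eq_child {x v u : V} (hv : v ∈ T.children u) (hm : x ∈ T.subtree v) :
    T.G.Adj x u ↔ x = v := by
  constructor
  · intro hadj
    rcases T.adj_parent hadj with h1 | h1
    · by_contra hne
      have : T.parent x ∈ T.subtree v := T.parent_mem_subtree hm hne
      exact T.not_mem_subtree_child hv (h1 ▸ this)
    · exfalso
      exact T.not_mem_subtree_child hv (T.mem_subtree_of_parent_mem (h1.symm ▸ hm))
  · rintro rfl; exact T.child_adj hv

/-! ### counting helpers -/

lemma count_filter_of_pred {p : V → Bool} {v : V} (hp : p v = true) (l : List V) :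
    (l.filter p).count v = l.count v := by
  induction l with
  | nil => rfl
  | cons h t ih =>
    by_cases hh : p h
    · rw [List.filter_cons_of_pos hh, List.count_cons, List.count_cons, ih]
    · rw [List.filter_cons_of_neg (by simpa using hh), List.count_cons, ih]
      have : ¬ v = h := fun e => hh (e ▸ hp)
      simp [this, Ne.symm this]

lemma sum_map_adj_children {u : V} : ∀ {l : List V}, (∀ x ∈ l, x ∈ T.subtree u) →
    (l.map fun x => if T.G.Adj x u then (1:ℤ) else 0).sum
      = ∑ v ∈ T.children u, (l.count v : ℤ) := by
  intro l
  induction l with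
  | nil => simp
  | cons h t ih =>
    intro hm
    have hsum : ∀ v, ((h :: t).count v : ℤ) = (t.count v : ℤ) + if v = h then 1 else 0 := by
      intro v; rw [List.count_cons]
      by_cases hvh : v = h
      · simp [hvh]
      · simp [hvh, Ne.symm hvh]
    simp only [List.map_cons, List.sum_cons, hsum, Finset.sum_add_distrib]
    rw [ih (fun x hx => hm x (by simp [hx]))]
    rw [Finset.sum_ite_eq' (T.children u) h (fun _ => (1:ℤ))]
    have : T.G.Adj h u ↔ h ∈ T.children u := T.adj_iff_child (hm h (by simp))
    by_cases hadj : T.G.Adj h u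
    · rw [if_pos hadj, if_pos (this.mp hadj)]; ring
    · rw [if_neg hadj, if_neg (fun hc => hadj (this.mpr hc))]; ring

lemma sum_map_adj_single {u v : V} (hv : v ∈ T.children u) :
    ∀ {l : List V}, (∀ x ∈ l, x ∈ T.subtree v) →
    (l.map fun x => if T.G.Adj x u then (1:ℤ) else 0).sum = (l.count v : ℤ) := by
  intro l
  induction l with
  | nil => simp
  | cons h t ih =>
    intro hm
    have hiff : T.G.Adj h u ↔ h = v := T.adj_iff_eq_child hv (hm h (by simp))
    have hcnt : ((h :: t).count v : ℤ) = (t.count v : ℤ) + if v = h then 1 else 0 := by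
      rw [List.count_cons]
      by_cases hvh : v = h
      · simp [hvh]
      · simp [hvh, Ne.symm hvh]
    simp only [List.map_cons, List.sum_cons, hcnt]
    rw [ih (fun x hx => hm x (by simp [hx]))]
    by_cases hadj : T.G.Adj h u
    · rw [if_pos hadj, if_pos ((show v = h from (hiff.mp hadj).symm))]; ring
    · rw [if_neg hadj, if_neg (fun e => hadj (hiff.mpr e.symm))]; ring

/-! ### the decomposition lemma -/

lemma decompose {u v : V} (hv : v ∈ T.children u) :
    ∀ (l : List V) (σ σ' : V → ℕ), T.ValidSeq σ l → (∀ x ∈ l, x ∈ T.subtree u) →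
    (∀ x ∈ T.subtree v, σ' x = σ x + if x = v then l.count u else 0) →
    T.ValidSeq σ' (l.filter (fun x => decide (x ∈ T.subtree v))) ∧
      ∀ x ∈ T.subtree v,
        T.fireList σ' (l.filter (fun x => decide (x ∈ T.subtree v))) x = T.fireList σ l x := by
  intro l
  induction l with
  | nil =>
    intro σ σ' _ _ hyp
    refine ⟨trivial, fun x hx => ?_⟩
    simp only [List.filter_nil]
    show σ' x = σ x
    simpa using hyp x hx
  | cons h t ih =>
    intro σ σ' hval hm hyp
    obtain ⟨h1, h2⟩ := hval
    have huv : u ∉ T.subtree v := T.not_mem_subtree_child hv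
    by_cases hhv : h ∈ T.subtree v
    · -- h fires inside subtree v
      have hhu : h ≠ u := fun e => huv (e ▸ hhv)
      have hcnt : (h :: t).count u = t.count u := by
        rw [List.count_cons]; simp [hhu, Ne.symm hhu]
      have hfire : ∀ x ∈ T.subtree v,
          T.fire σ' h x = T.fire σ h x + if x = v then t.count u else 0 := by
        intro x hx
        by_cases hxh : x = h
        · subst hxh
          have e1 : T.fire σ' x x = σ' x - T.deg x := by simp [fire]
          have e2 : T.fire σ x x = σ x - T.deg x := by simp [fire]
          rw [e1, e2, hyp x hx, hcnt]
          split <;> omega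
        · have e1 : T.fire σ' h x = if T.G.Adj h x then σ' x + 1 else σ' x := by
            simp [fire, hxh]
          have e2 : T.fire σ h x = if T.G.Adj h x then σ x + 1 else σ x := by
            simp [fire, hxh]
          rw [e1, e2, hyp x hx, hcnt]
          split <;> split <;> omega
      have hfull' : T.deg h ≤ σ' h := by
        rw [hyp h hhv]; split <;> omega
      obtain ⟨ihv, ihe⟩ := ih (T.fire σ h) (T.fire σ' h) h2
        (fun x hx => hm x (by simp [hx])) hfire
      rw [List.filter_cons_of_pos (by simpa using hhv)]
      exact ⟨⟨hfull', ihv⟩, fun x hx => ihe x hx⟩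
    · by_cases hhu : h = u
      · -- h = u : firing of u, dropped from the filtered list
        subst hhu
        have hcnt : (h :: t).count h = t.count h + 1 := by
          rw [List.count_cons]; simp
        have hyp' : ∀ x ∈ T.subtree v,
            σ' x = T.fire σ h x + if x = v then t.count h else 0 := by
          intro x hx
          have hxh : x ≠ h := fun e => hhv (e ▸ hx)
          have e2 : T.fire σ h x = if T.G.Adj h x then σ x + 1 else σ x := by
            simp [fire, hxh]
          have hiff : T.G.Adj h x ↔ x = v := by
            rw [T.G.adj_comm]; exact T.adj_iff_eq_child hv hx
          rw [hyp x hx, hcnt, e2]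
          by_cases hxv : x = v
          · rw [if_pos (hiff.mpr hxv), if_pos hxv, if_pos hxv]; omega
          · rw [if_neg (fun hc => hxv (hiff.mp hc)), if_neg hxv, if_neg hxv]
        obtain ⟨ihv, ihe⟩ := ih (T.fire σ h) σ' h2
          (fun x hx => hm x (by simp [hx])) hyp'
        rw [List.filter_cons_of_neg (by simpa using hhv)]
        exact ⟨ihv, fun x hx => ihe x hx⟩
      · -- h elsewhere in subtree u : does not affect subtree v
        have hcnt : (h :: t).count u = t.count u := by
          rw [List.count_cons]; simp [hhu, Ne.symm (hhu : h ≠ u)]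
        have hfire : ∀ x ∈ T.subtree v, T.fire σ h x = σ x := by
          intro x hx
          have hxh : x ≠ h := fun e => hhv (e ▸ hx)
          have e2 : T.fire σ h x = if T.G.Adj h x then σ x + 1 else σ x := by
            simp [fire, hxh]
          rw [e2, if_neg ?_]
          intro hadj
          rcases T.adj_parent hadj with hp | hp
          · exact hhv (T.mem_subtree_of_parent_mem (by rw [hp]; exact hx))
          · by_cases hxv : x = v
            · exact hhu (by rw [← hp, hxv, T.child_parent hv])
            · exact hhv (by rw [← hp]; exact T.parent_mem_subtree hx hxv)
        have hyp' : ∀ x ∈ T.subtree v,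
            σ' x = T.fire σ h x + if x = v then t.count u else 0 := by
          intro x hx; rw [hyp x hx, hcnt, hfire x hx]
        obtain ⟨ihv, ihe⟩ := ih (T.fire σ h) σ' h2
          (fun x hx => hm x (by simp [hx])) hyp'
        rw [List.filter_cons_of_neg (by simpa using hhv)]
        exact ⟨ihv, fun x hx => ihe x hx⟩


lemma final_eq_of_exists {σ : V → ℕ} {v : V}
    (hex : ∃ l : List V, (∀ x ∈ l, x ∈ T.subtree v) ∧ T.ValidSeq σ l ∧
      T.LocalTerminal (T.fireList σ l) (T.subtree v)) :
    T.final σ v = T.fireList σ hex.choose := by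
  rw [final, dif_pos hex]

lemma delta_eq {σ : V → ℕ} {u v : V} (hv : v ∈ T.children u)
    (hσt : T.LocalTerminal σ (T.subtree v)) {m : ℕ} {L : List V}
    (hvL : T.ValidSeq (fun w => σ w + if w = v then m else 0) L)
    (hmL : ∀ x ∈ L, x ∈ T.subtree v)
    (htL : T.LocalTerminal
      (T.fireList (fun w => σ w + if w = v then m else 0) L) (T.subtree v)) :
    T.delta σ v m = L.count v := by
  unfold delta
  rw [T.child_parent hv]
  set σm : V → ℕ := fun w => σ w + if w = v then m else 0 with hσm
  have hex : ∃ l : List V, (∀ x ∈ l, x ∈ T.subtree v) ∧ T.ValidSeq σm l ∧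
      T.LocalTerminal (T.fireList σm l) (T.subtree v) := ⟨L, hmL, hvL, htL⟩
  have hex0 : ∃ l : List V, (∀ x ∈ l, x ∈ T.subtree v) ∧ T.ValidSeq σ l ∧
      T.LocalTerminal (T.fireList σ l) (T.subtree v) := ⟨[], by simp, trivial, hσt⟩
  rw [T.final_eq_of_exists hex, T.final_eq_of_exists hex0]
  obtain ⟨hm1, hv1, ht1⟩ := hex.choose_spec
  obtain ⟨hm0, hv0, ht0⟩ := hex0.choose_spec
  have h0 : hex0.choose = [] := by
    cases h : hex0.choose with
    | nil => rfl
    | cons x t =>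
      exfalso
      rw [h] at hv0 hm0
      have := hσt x (hm0 x (by simp))
      exact absurd hv0.1 (by omega)
  rw [h0]
  have hne : u ∉ T.subtree v := T.not_mem_subtree_child hv
  have hcnt0 : (hex.choose).count u = 0 :=
    List.count_eq_zero.mpr (fun hc => hne (hm1 u hc))
  have hcons := T.conservation hv1 u
  rw [T.sum_map_adj_single hv hm1, hcnt0] at hcons
  have huv : u ≠ v := fun e => (T.child_ne hv) e.symm
  have hσmu : σm u = σ u := by simp [hσm, huv]
  rw [hσmu] at hcons
  have hval : T.fireList σm hex.choose u = σ u + hex.choose.count v := by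
    push_cast at hcons; omega
  have hcv : hex.choose.count v = L.count v := T.counts_eq hv1 hm1 ht1 hvL hmL htL v
  show T.fireList σm hex.choose u - T.fireList σ [] u = L.count v
  rw [hval, hcv]
  show σ u + L.count v - σ u = L.count v
  omega

end SandpileTree

/-- The partial firing number `c↓(u)` — the number of firings performed on `u` in any
firing sequence within `subtree u` that reaches local terminality — equals the least
`k` with `ψ_u(k) < degree u`. -/
theorem SandpileTree.count_eq_sInf_psi (T : SandpileTree V) (σ : V → ℕ) (u : V)
    (hσ : ∀ v ∈ T.children u, T.LocalTerminal σ (T.subtree v))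
    (l : List V) (hl : ∀ v ∈ l, v ∈ T.subtree u) (hval : T.ValidSeq σ l)
    (hterm : T.LocalTerminal (T.fireList σ l) (T.subtree u)) :
    l.count u = sInf {k : ℕ | T.psi σ u k < (T.deg u : ℤ)} := by
  classical
  have hLv : ∀ v ∈ T.children u,
      T.ValidSeq (fun w => σ w + if w = v then l.count u else 0)
        (l.filter (fun x => decide (x ∈ T.subtree v))) ∧
      (∀ x ∈ l.filter (fun x => decide (x ∈ T.subtree v)), x ∈ T.subtree v) ∧
      T.LocalTerminal (T.fireList (fun w => σ w + if w = v then l.count u else 0)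
        (l.filter (fun x => decide (x ∈ T.subtree v)))) (T.subtree v) := by
    intro v hv
    obtain ⟨hval', hfix⟩ := T.decompose hv l σ
      (fun w => σ w + if w = v then l.count u else 0) hval hl (fun x hx => rfl)
    refine ⟨hval', ?_, ?_⟩
    · intro x hx; exact of_decide_eq_true (List.mem_filter.mp hx).2
    · intro x hx
      rw [hfix x hx]
      exact hterm x (T.child_subtree_subset hv hx)
  have hdelta_k : ∀ v ∈ T.children u, T.delta σ v (l.count u) = l.count v := by
    intro v hv
    obtain ⟨h1, h2, h3⟩ := hLv v hv
    rw [T.delta_eq hv (hσ v hv) h1 h2 h3]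
    exact SandpileTree.count_filter_of_pred (by simp [T.mem_subtree_self v]) l
  have hA : T.psi σ u (l.count u) < (T.deg u : ℤ) := by
    have hcons := T.conservation hval u
    rw [T.sum_map_adj_children hl] at hcons
    have htu : (T.fireList σ l u : ℤ) < T.deg u := by
      exact_mod_cast hterm u (T.mem_subtree_self u)
    unfold psi
    have he : ∑ v ∈ T.children u, (T.delta σ v (l.count u) : ℤ)
        = ∑ v ∈ T.children u, (l.count v : ℤ) :=
      Finset.sum_congr rfl (fun v hv => by rw [hdelta_k v hv])
    rw [he]
    linarith [hcons]
  have hB : ∀ j, j < l.count u → (T.deg u : ℤ) ≤ T.psi σ u j := by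
    intro j hj
    obtain ⟨p, s, hls, hpc⟩ := SandpileTree.count_split l j hj
    have hvps : T.ValidSeq σ (p ++ u :: s) := hls ▸ hval
    rw [T.validSeq_append] at hvps
    obtain ⟨hvp, hvrest⟩ := hvps
    have hfull : T.deg u ≤ T.fireList σ p u := hvrest.1
    have hmp : ∀ x ∈ p, x ∈ T.subtree u := fun x hx =>
      hl x (by rw [hls]; exact List.mem_append.mpr (Or.inl hx))
    have hcons := T.conservation hvp u
    rw [T.sum_map_adj_children hmp] at hcons
    have hple : ∀ v ∈ T.children u, (p.count v : ℤ) ≤ (T.delta σ v j : ℤ) := by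
      intro v hv
      obtain ⟨hv1, hm1, ht1⟩ := hLv v hv
      obtain ⟨hvpv, _⟩ := T.decompose hv p σ
        (fun w => σ w + if w = v then j else 0) hvp hmp (fun x hx => by rw [hpc])
      have hjk : ∀ x, (fun w => σ w + if w = v then j else 0) x
          ≤ (fun w => σ w + if w = v then l.count u else 0) x := by
        intro x; simp only; split <;> omega
      have hbound : ∀ q : List V,
          T.ValidSeq (fun w => σ w + if w = v then j else 0) q →
          (∀ x ∈ q, x ∈ T.subtree v) →
          q.length ≤ (l.filter (fun x => decide (x ∈ T.subtree v))).length := by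
        intro q hq hqm
        have hqk := (T.valid_mono hjk hq).1
        have hcnt := T.least_action q _ (l.filter (fun x => decide (x ∈ T.subtree v)))
          hqk hqm hv1 ht1
        rw [SandpileTree.length_eq_sum_count q,
          SandpileTree.length_eq_sum_count (l.filter (fun x => decide (x ∈ T.subtree v)))]
        exact Finset.sum_le_sum (fun x _ => hcnt x)
      obtain ⟨Lj, hLjv, hLjm, hLjt⟩ := T.exists_terminal hbound
      have hdj : T.delta σ v j = Lj.count v := T.delta_eq hv (hσ v hv) hLjv hLjm hLjt
      have hpcount : p.count v = (p.filter (fun x => decide (x ∈ T.subtree v))).count v :=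
        (SandpileTree.count_filter_of_pred (by simp [T.mem_subtree_self v]) p).symm
      have hmono := T.least_action (p.filter (fun x => decide (x ∈ T.subtree v))) _ Lj hvpv
        (fun x hx => of_decide_eq_true (List.mem_filter.mp hx).2) hLjv hLjt v
      rw [hdj, hpcount]
      exact_mod_cast hmono
    unfold psi
    have hsum : ∑ v ∈ T.children u, (p.count v : ℤ)
        ≤ ∑ v ∈ T.children u, (T.delta σ v j : ℤ) := Finset.sum_le_sum hple
    have hf : (T.deg u : ℤ) ≤ T.fireList σ p u := by exact_mod_cast hfull
    rw [hpc] at hcons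
    linarith [hcons]
  have hmem : l.count u ∈ {k : ℕ | T.psi σ u k < (T.deg u : ℤ)} := hA
  apply le_antisymm
  · apply le_csInf ⟨l.count u, hmem⟩
    intro j hj
    by_contra hlt
    push_neg at hlt
    exact absurd hj (not_lt.mpr (hB j hlt))
  · exact Nat.sInf_le hmem
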